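/- Let P = p_1 ... p_n be a cutting of a pizza into an odd number n of slices, and suppose Bob has a strategy with gain g ≥ |P|/2, i.e., a strategy guaranteeing him a set Q of (n-1)/2 slices of total size at least g. Let x = min_i |p_i| > 0 and let P' be the cutting with slice sizes |p'_i| = |p_i| - x. Then using the same strategy on P', Bob's guaranteed gain is at least g - x(n-1)/2, and this quantity is strictly greater than g·|P'|/|P|, where |P'| = |P| - xn. -/

import Mathlib

/-- Adjacency of slices on the circular pizza with `n` slices. -/
def adj (n : ℕ) (i j : Fin n) : Prop :=
  (i.1 + 1) % n = j.1 ∨ (j.1 + 1) % n = i.1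

instance (n : ℕ) (i j : Fin n) : Decidable (adj n i j) := by
  unfold adj; infer_instance

/-- `h` lists the slices taken so far, in the order they were taken.
It is a valid (partial) play of the Polite Pizza Protocol if no slice is taken
twice and every slice except the first is adjacent to a previously taken one. -/
def ValidHist (n : ℕ) (h : List (Fin n)) : Prop :=
  h.Nodup ∧ ∀ (k : ℕ) (hk : k < h.length), 0 < k →
    ∃ (j : ℕ) (hj : j < k), adj n (h.get ⟨k, hk⟩) (h.get ⟨j, hj.trans hk⟩)

/-- `m` is a legal next slice after history `h`. -/
def ValidMove (n : ℕ) (h : List (Fin n)) (m : Fin n) : Prop :=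
  m ∉ h ∧ (h = [] ∨ ∃ x ∈ h, adj n m x)

/-- Total size of the slices taken at (0-based) turns satisfying `f`. -/
def gainOn (n : ℕ) (P : Fin n → ℝ) (f : ℕ → Bool) (l : List (Fin n)) : ℝ :=
  (((l.zipIdx.map Prod.swap).filter (fun p => f p.1)).map (fun p => P p.2)).sum

/-- Alice moves at even turns (0-based), Bob at odd turns. -/
def isAlice (k : ℕ) : Bool := k % 2 == 0
def isBob (k : ℕ) : Bool := k % 2 == 1

def aliceGain (n : ℕ) (P : Fin n → ℝ) (l : List (Fin n)) : ℝ := gainOn n P isAlice l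
def bobGain (n : ℕ) (P : Fin n → ℝ) (l : List (Fin n)) : ℝ := gainOn n P isBob l

/-- The play `l` is consistent with the strategy `s` used at the turns satisfying `f`. -/
def Consistent (n : ℕ) (f : ℕ → Bool) (s : List (Fin n) → Fin n) (l : List (Fin n)) : Prop :=
  ∀ (k : ℕ) (hk : k < l.length), f k → l.get ⟨k, hk⟩ = s (l.take k)

/-- The strategy `s`, used at turns satisfying `f`, always produces legal moves. -/
def Legal (n : ℕ) (f : ℕ → Bool) (s : List (Fin n) → Fin n) : Prop :=
  ∀ h, ValidHist n h → h.length < n → f h.length → ValidMove n h (s h)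

/-- Number of jumps made at turns satisfying `f` during the play `l`:
turn `k ≥ 1` is a jump if the slice taken is not adjacent to the one taken at turn `k-1`. -/
def jumpCount (n : ℕ) (f : ℕ → Bool) (l : List (Fin n)) : ℕ :=
  ((((l.zip l.tail).zipIdx.map Prod.swap)).filter
    (fun p => f (p.1 + 1) && !(decide (adj n p.2.2 p.2.1)))).length

/-- Alice has a strategy making at most `j` jumps and guaranteeing her
slices of total size at least `g`. -/
def AliceJGain (n : ℕ) (P : Fin n → ℝ) (j : ℕ) (g : ℝ) : Prop :=
  ∃ s : List (Fin n) → Fin n, Legal n isAlice s ∧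
    ∀ l : List (Fin n), ValidHist n l → l.length = n → Consistent n isAlice s l →
      g ≤ aliceGain n P l ∧ jumpCount n isAlice l ≤ j

/-- Alice has a strategy guaranteeing her slices of total size at least `g`. -/
def AliceGain' (n : ℕ) (P : Fin n → ℝ) (g : ℝ) : Prop :=
  ∃ s : List (Fin n) → Fin n, Legal n isAlice s ∧
    ∀ l : List (Fin n), ValidHist n l → l.length = n → Consistent n isAlice s l →
      g ≤ aliceGain n P l

/-- Bob (moving second) has a strategy guaranteeing him slices of total size at least `g`. -/
def BobGain' (n : ℕ) (P : Fin n → ℝ) (g : ℝ) : Prop :=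
  ∃ s : List (Fin n) → Fin n, Legal n isBob s ∧
    ∀ l : List (Fin n), ValidHist n l → l.length = n → Consistent n isBob s l →
      g ≤ bobGain n P l

/-!
In every complete play Bob takes exactly `⌊n/2⌋ = (n-1)/2` slices, so lowering every slice by `x`
lowers each of his outcomes, and hence the gain guaranteed by any fixed strategy, by exactly
`x(n-1)/2`. The strict inequality then reduces to `g n > |P|(n-1)/2`, which holds since
`g ≥ |P|/2 > 0`.
-/
theorem List.sum_map_sub_const {α M : Type*} [AddCommGroup M] (l : List α) (f : α → M) (c : M) :
    (l.map fun a => f a - c).sum = (l.map f).sum - l.length • c := by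
  induction l with
  | nil => simp
  | cons a l ih => simp only [List.map_cons, List.sum_cons, ih, List.length_cons, succ_nsmul]; abel

theorem List.length_filter_zipIdx_swap {α : Type*} (l : List α) (f : ℕ → Bool) :
    ((l.zipIdx.map Prod.swap).filter fun p => f p.1).length =
      ((List.range l.length).filter f).length := by
  have hidx : (l.zipIdx.map Prod.swap).map Prod.fst = List.range l.length := by
    rw [List.map_map]; exact (List.zipIdx_map_snd 0 l).trans List.range_eq_range'.symm
  rw [← hidx, List.filter_map (f := Prod.fst), List.length_map]
  rfl

theorem length_filter_range_isBob (n : ℕ) : ((List.range n).filter isBob).length = n / 2 := by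
  induction n with
  | zero => rfl
  | succ m ih =>
    rw [List.range_succ, List.filter_append, List.length_append, ih]
    rcases Nat.mod_two_eq_zero_or_one m with h | h <;> simp [isBob, h] <;> omega

theorem gainOn_sub_const (n : ℕ) (P : Fin n → ℝ) (f : ℕ → Bool) (l : List (Fin n)) (x : ℝ) :
    gainOn n (fun i => P i - x) f l =
      gainOn n P f l - ((List.range l.length).filter f).length * x := by
  rw [gainOn, List.sum_map_sub_const, List.length_filter_zipIdx_swap, nsmul_eq_mul, gainOn]

theorem bobGain_sub_const {n : ℕ} (P : Fin n → ℝ) {l : List (Fin n)} (hl : l.length = n) (x : ℝ) :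
    bobGain n (fun i => P i - x) l = bobGain n P l - (n / 2 : ℕ) * x := by
  rw [bobGain, gainOn_sub_const, length_filter_range_isBob, hl, bobGain]

theorem BobGain'.sub_const {n : ℕ} {P : Fin n → ℝ} {g : ℝ} (hg : BobGain' n P g) (x : ℝ) :
    BobGain' n (fun i => P i - x) (g - (n / 2 : ℕ) * x) := by
  obtain ⟨s, hs, hgain⟩ := hg
  refine ⟨s, hs, fun l hv hl hc => ?_⟩
  rw [bobGain_sub_const P hl]
  linarith [hgain l hv hl hc]

theorem Nat.cast_div_two_of_odd {n : ℕ} (hn : Odd n) : ((n / 2 : ℕ) : ℝ) = ((n : ℝ) - 1) / 2 := by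
  obtain ⟨m, rfl⟩ := hn
  rw [show (2 * m + 1) / 2 = m by omega]
  push_cast; ring

theorem mul_sub_div_lt_sub_of_half_le {S g x n : ℝ} (hS : 0 < S) (hg : S / 2 ≤ g) (hx : 0 < x)
    (hn : 1 ≤ n) : g * (S - x * n) / S < g - x * (n - 1) / 2 := by
  rw [div_lt_iff₀ hS]
  nlinarith [mul_pos hx hS, mul_le_mul_of_nonneg_right hg (by positivity : 0 ≤ x * n)]

theorem bob_gain_after_subtracting_min_general (n : ℕ) (hn : Odd n)
    (P : Fin n → ℝ) (hP : ∀ i, 0 < P i)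
    (g : ℝ) (hg : BobGain' n P g) (hghalf : (∑ i, P i) / 2 ≤ g)
    (x : ℝ) (hxpos : 0 < x) :
    BobGain' n (fun i => P i - x) (g - x * ((n : ℝ) - 1) / 2) ∧
    g * ((∑ i, P i) - x * n) / (∑ i, P i) < g - x * ((n : ℝ) - 1) / 2 := by
  have : Nonempty (Fin n) := ⟨⟨0, hn.pos⟩⟩
  have hsum : 0 < ∑ i, P i := Finset.sum_pos (fun i _ => hP i) Finset.univ_nonempty
  have hn1 : (1 : ℝ) ≤ n := by exact_mod_cast hn.pos
  refine ⟨?_, mul_sub_div_lt_sub_of_half_le hsum hghalf hxpos hn1⟩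
  convert hg.sub_const x using 2
  rw [Nat.cast_div_two_of_odd hn]
  ring

/-- subtracting the minimum slice size `x > 0` from every slice,
Bob keeps (with the same strategy) gain at least `g - x(n-1)/2`, which is strictly
more than `g·|P\'|/|P|`. -/
theorem bob_gain_after_subtracting_min (n : ℕ) (hn : Odd n)
    (P : Fin n → ℝ) (hP : ∀ i, 0 < P i)
    (g : ℝ) (hg : BobGain' n P g) (hghalf : (∑ i, P i) / 2 ≤ g)
    (x : ℝ) (hxpos : 0 < x) (hxle : ∀ i, x ≤ P i) (hxmin : ∃ i, P i = x) :
    BobGain' n (fun i => P i - x) (g - x * ((n : ℝ) - 1) / 2) ∧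
    g * ((∑ i, P i) - x * n) / (∑ i, P i) < g - x * ((n : ℝ) - 1) / 2 :=
  bob_gain_after_subtracting_min_general n hn P hP g hg hghalf x hxpos
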